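/- Let n_s ≥ 3 and φ(x) = x/√(x²+1) applied elementwise. For every φ-network f̂ of depth L and width N from ℝ^d to ℝ^m, there exists a PLN-Net f of depth L, norm size n_s, and width n_s·N from ℝ^d to ℝ^m such that f(x) = f̂(x) for all x ∈ ℝ^d. -/

import Mathlib

/-- Layer normalization on `ℝ^n`: `LN(h)ⱼ = (hⱼ − μ)/σ` when `σ ≠ 0`, and `0` when `σ = 0`. -/
noncomputable def LN {n : ℕ} (h : Fin n → ℝ) : Fin n → ℝ :=
  let μ : ℝ := (∑ i, h i) / n
  let σ : ℝ := Real.sqrt ((∑ i, (h i - μ) ^ 2) / n)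
  if σ = 0 then 0 else fun j => (h j - μ) / σ

/-- Parallel layer normalization: `N` consecutive blocks of size `ns`, `LN` on each. -/
noncomputable def PLN (ns N : ℕ) (h : Fin (N * ns) → ℝ) : Fin (N * ns) → ℝ :=
  fun i => LN (fun j : Fin ns => h (finProdFinEquiv (i.divNat, j))) i.modNat

/-- The activation function `φ(x) = x/√(x²+1)`. -/
noncomputable def phi (x : ℝ) : ℝ := x / Real.sqrt (x ^ 2 + 1)

/-- `PhiNet φ N L d m f`: `f : ℝ^d → ℝ^m` is a `φ`-network of depth `L`
(`L` elementwise `φ` layers interleaved with `L+1` affine maps), each hidden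
dimension being at most `N`. -/
inductive PhiNet (φ : ℝ → ℝ) (N : ℕ) : ℕ → (d m : ℕ) → ((Fin d → ℝ) → (Fin m → ℝ)) → Prop
  | affine {d m : ℕ} (W : Matrix (Fin m) (Fin d) ℝ) (b : Fin m → ℝ) :
      PhiNet φ N 0 d m (fun x => W.mulVec x + b)
  | layer {L d k m : ℕ} (hk : k ≤ N) (W : Matrix (Fin k) (Fin d) ℝ) (b : Fin k → ℝ)
      (g : (Fin k → ℝ) → (Fin m → ℝ)) (hg : PhiNet φ N L k m g) :
      PhiNet φ N (L + 1) d m (fun x => g (fun i => φ ((W.mulVec x + b) i)))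

/-- `PLNNet ns N L d m f`: `f : ℝ^d → ℝ^m` is a PLN-Net of depth `L` and norm size `ns`
(`L` PLN layers interleaved with `L+1` affine maps), each hidden dimension being a
multiple of `ns` of size at most `ns·N`. -/
inductive PLNNet (ns N : ℕ) : ℕ → (d m : ℕ) → ((Fin d → ℝ) → (Fin m → ℝ)) → Prop
  | affine {d m : ℕ} (W : Matrix (Fin m) (Fin d) ℝ) (b : Fin m → ℝ) :
      PLNNet ns N 0 d m (fun x => W.mulVec x + b)
  | layer {L d k m : ℕ} (hk : k ≤ N) (W : Matrix (Fin (k * ns)) (Fin d) ℝ)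
      (b : Fin (k * ns) → ℝ)
      (g : (Fin (k * ns) → ℝ) → (Fin m → ℝ)) (hg : PLNNet ns N L (k * ns) m g) :
      PLNNet ns N (L + 1) d m (fun x => g (PLN ns k (W.mulVec x + b)))

/-!
A `φ`-neuron `t` is encoded by the block `t · (cos θⱼ)ⱼ + (sin θⱼ)ⱼ` with `θⱼ = 2πj/3` for
`j < 3` and zero entries beyond. This block has mean zero and squared norm `3(t² + 1)/2`,
so layer normalization sends its first entry to `t / √(3(t² + 1)/(2 n_s)) = √(2 n_s/3) · φ(t)`.
The block is affine in `t`, hence its construction merges into the preceding affine map, and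
the rescaled read-out of the first entries merges into the following one.
-/

open Matrix

noncomputable section

def cosCoeff : ℕ → ℝ
  | 0 => 1
  | 1 => -1 / 2
  | 2 => -1 / 2
  | _ => 0

def sinCoeff : ℕ → ℝ
  | 1 => Real.sqrt 3 / 2
  | 2 => -(Real.sqrt 3 / 2)
  | _ => 0

def liftBlock (ns : ℕ) (t : ℝ) : Fin ns → ℝ := fun j => cosCoeff j * t + sinCoeff j

def liftLayer (ns : ℕ) {k : ℕ} (y : Fin k → ℝ) : Fin (k * ns) → ℝ :=
  fun p => liftBlock ns (y p.divNat) p.modNat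

def liftMatrix (ns : ℕ) {k d : ℕ} (W : Matrix (Fin k) (Fin d) ℝ) :
    Matrix (Fin (k * ns)) (Fin d) ℝ :=
  Matrix.of fun p q => cosCoeff p.modNat * W p.divNat q

def blockSelect {k ns : ℕ} (c : ℝ) (j₀ : Fin ns) : Matrix (Fin k) (Fin (k * ns)) ℝ :=
  Matrix.of fun i p => if p = finProdFinEquiv (i, j₀) then c else 0

end

lemma Fin.sum_univ_eq_sum_three {M : Type*} [AddCommMonoid M] {ns : ℕ} (hns : 3 ≤ ns)
    (f : ℕ → M) (hf : ∀ i, 3 ≤ i → f i = 0) :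
    ∑ j : Fin ns, f j = f 0 + f 1 + f 2 := by
  rw [Fin.sum_univ_eq_sum_range, ← Finset.sum_subset (Finset.range_subset_range.mpr hns)
      (fun i _ hi => hf i (by simpa using hi))]
  simp [Finset.sum_range_succ]

lemma cosCoeff_of_three_le {i : ℕ} (hi : 3 ≤ i) : cosCoeff i = 0 := by
  match i, hi with
  | _ + 3, _ => rfl

lemma sinCoeff_of_three_le {i : ℕ} (hi : 3 ≤ i) : sinCoeff i = 0 := by
  match i, hi with
  | _ + 3, _ => rfl

lemma sum_liftBlock {ns : ℕ} (hns : 3 ≤ ns) (t : ℝ) : ∑ j, liftBlock ns t j = 0 := by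
  simp only [liftBlock]
  rw [Fin.sum_univ_eq_sum_three hns (fun i => cosCoeff i * t + sinCoeff i)
    (fun i hi => by simp [cosCoeff_of_three_le hi, sinCoeff_of_three_le hi])]
  simp only [cosCoeff, sinCoeff]
  ring

lemma sum_liftBlock_sq {ns : ℕ} (hns : 3 ≤ ns) (t : ℝ) :
    ∑ j, liftBlock ns t j ^ 2 = 3 / 2 * (t ^ 2 + 1) := by
  simp only [liftBlock]
  rw [Fin.sum_univ_eq_sum_three hns (fun i => (cosCoeff i * t + sinCoeff i) ^ 2)
    (fun i hi => by simp [cosCoeff_of_three_le hi, sinCoeff_of_three_le hi])]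
  simp only [cosCoeff, sinCoeff]
  linear_combination (1 / 2 : ℝ) * Real.sq_sqrt (show (0 : ℝ) ≤ 3 by norm_num)

/-- On a mean-zero vector `LN` is division by the root mean square; the degenerate case
`σ = 0` agrees with it since `x / 0 = 0`. -/
lemma LN_apply_of_sum_eq_zero {n : ℕ} (h : Fin n → ℝ) (hsum : ∑ i, h i = 0) (j : Fin n) :
    LN h j = h j / Real.sqrt ((∑ i, h i ^ 2) / n) := by
  simp only [LN, hsum, zero_div, sub_zero]
  split_ifs with hσ
  · rw [hσ, div_zero, Pi.zero_apply]
  · rfl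

lemma sqrt_mul_LN_liftBlock {ns : ℕ} (hns : 3 ≤ ns) (t : ℝ) :
    Real.sqrt (3 / (2 * ns)) * LN (liftBlock ns t) ⟨0, by omega⟩ = phi t := by
  have hns₀ : (0 : ℝ) < ns := by exact_mod_cast (show 0 < ns by omega)
  have hc : 0 < Real.sqrt (3 / (2 * ns)) := Real.sqrt_pos.mpr (by positivity)
  have hrms : (3 / 2 * (t ^ 2 + 1) / ns : ℝ) = 3 / (2 * ns) * (t ^ 2 + 1) := by
    field_simp
  rw [LN_apply_of_sum_eq_zero _ (sum_liftBlock hns t), sum_liftBlock_sq hns, hrms,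
    Real.sqrt_mul (by positivity), ← mul_div_assoc, mul_div_mul_left _ _ hc.ne']
  simp [liftBlock, cosCoeff, sinCoeff, phi]

lemma PLN_finProdFinEquiv {ns k : ℕ} (h : Fin (k * ns) → ℝ) (i : Fin k) (j : Fin ns) :
    PLN ns k h (finProdFinEquiv (i, j)) = LN (fun j' => h (finProdFinEquiv (i, j'))) j := by
  have hij := finProdFinEquiv.symm_apply_apply (i, j)
  rw [finProdFinEquiv_symm_apply, Prod.mk.injEq] at hij
  rw [PLN, hij.1, hij.2]

lemma liftLayer_finProdFinEquiv {ns k : ℕ} (y : Fin k → ℝ) (i : Fin k) (j : Fin ns) :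
    liftLayer ns y (finProdFinEquiv (i, j)) = liftBlock ns (y i) j := by
  have hij := finProdFinEquiv.symm_apply_apply (i, j)
  rw [finProdFinEquiv_symm_apply, Prod.mk.injEq] at hij
  rw [liftLayer, hij.1, hij.2]

lemma liftLayer_mulVec_add (ns : ℕ) {k d : ℕ} (W : Matrix (Fin k) (Fin d) ℝ)
    (x : Fin d → ℝ) (b : Fin k → ℝ) :
    liftLayer ns (W *ᵥ x + b) = liftMatrix ns W *ᵥ x + liftLayer ns b := by
  ext p
  simp only [liftLayer, liftBlock, liftMatrix, Matrix.mulVec, dotProduct, Matrix.of_apply,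
    Pi.add_apply, mul_add, Finset.mul_sum, mul_assoc]
  ring

lemma blockSelect_mulVec {k ns : ℕ} (c : ℝ) (j₀ : Fin ns) (v : Fin (k * ns) → ℝ) :
    blockSelect c j₀ *ᵥ v = fun i => c * v (finProdFinEquiv (i, j₀)) := by
  ext i
  simp [blockSelect, Matrix.mulVec, dotProduct]

lemma blockSelect_mulVec_PLN_liftLayer {ns k : ℕ} (hns : 3 ≤ ns) (y : Fin k → ℝ) :
    blockSelect (Real.sqrt (3 / (2 * ns))) ⟨0, by omega⟩ *ᵥ PLN ns k (liftLayer ns y)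
      = fun i => phi (y i) := by
  ext i
  simp only [blockSelect_mulVec, PLN_finProdFinEquiv, liftLayer_finProdFinEquiv,
    sqrt_mul_LN_liftBlock hns]

lemma PLNNet.comp_mulVec {ns N L k m : ℕ} {g : (Fin k → ℝ) → (Fin m → ℝ)}
    (hg : PLNNet ns N L k m g) {d : ℕ} (V : Matrix (Fin k) (Fin d) ℝ) :
    PLNNet ns N L d m (fun x => g (V *ᵥ x)) := by
  cases hg with
  | affine W b => simpa only [Matrix.mulVec_mulVec] using PLNNet.affine (W * V) b
  | layer hk W b g' hg' =>
    simpa only [Matrix.mulVec_mulVec] using PLNNet.layer hk (W * V) b g' hg'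

/-- Every `φ`-network of depth `L` and width `N` from `ℝ^d` to `ℝ^m`, with
`φ(x) = x/√(x²+1)`, is exactly realized by a PLN-Net of depth `L`, norm size `n_s ≥ 3`,
and width `n_s·N`. -/
theorem PLNNet_represents_deep_phiNet (ns N L d m : ℕ) (hns : 3 ≤ ns)
    (fh : (Fin d → ℝ) → (Fin m → ℝ)) (hfh : PhiNet phi N L d m fh) :
    ∃ f : (Fin d → ℝ) → (Fin m → ℝ), PLNNet ns N L d m f ∧ ∀ x, f x = fh x := by
  induction hfh with
  | affine W b => exact ⟨_, .affine W b, fun _ => rfl⟩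
  | @layer L d k m hk W b g _ ih =>
    obtain ⟨f, hf, hfg⟩ := ih
    refine ⟨_, .layer hk (liftMatrix ns W) (liftLayer ns b) _
      (hf.comp_mulVec (blockSelect (Real.sqrt (3 / (2 * ns))) ⟨0, by omega⟩)), fun x => ?_⟩
    rw [← liftLayer_mulVec_add, blockSelect_mulVec_PLN_liftLayer hns, hfg]
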